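/- Let f : M → M be a hyperbolic homeomorphism with local product structure on a compact metric space (M,d) with contraction constants C, ε, λ, let A : M → GL(d,ℝ) be ν-Hölder continuous, α an automorphism of GL(d,ℝ), and suppose the α-twisted cocycle A_α is fiber-bunched. Then there exists a constant C' > 0, depending only on A, α and f, such that for every x ∈ M and all y, z ∈ W^s_ε(x), the stable holonomy H^{s,A,α}_{yz} = lim_{n→∞} α^{-n}(A_α^n(z)^{-1} A_α^n(y)) satisfies ‖H^{s,A,α}_{yz} − Id‖ ≤ C' d(y,z)^ν. The analogous estimate holds for the unstable holonomy H^{u,A,α}_{yz} = lim_{n→∞} α^n(A_α^{-n}(z)^{-1} A_α^{-n}(y)) when y, z ∈ W^u_ε(x). -/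

import Mathlib

open scoped Matrix.Norms.L2Operator

noncomputable section

/-- The `α`-twisted cocycle generated by `A` over `f`, at nonnegative times. -/
def twcN {M G : Type*} [Group G] (f : Equiv.Perm M) (α : MulAut G) (A : M → G) :
    ℕ → M → G
  | 0, _ => 1
  | n + 1, x => A ((f ^ n) x) * α (twcN f α A n x)

/-- The `α`-twisted cocycle generated by `A` over `f`, at all integer times. -/
def twc {M G : Type*} [Group G] (f : Equiv.Perm M) (α : MulAut G) (A : M → G) :
    ℤ → M → G
  | Int.ofNat n, x => twcN f α A n x
  | Int.negSucc n, x =>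
      (α ^ (Int.negSucc n)) ((twcN f α A (n + 1) ((f ^ (Int.negSucc n)) x))⁻¹)

/-- The local stable set `W^s_ε(x)`. -/
def localStable {M : Type*} [MetricSpace M] (f : Equiv.Perm M) (ε : ℝ) (x : M) :
    Set M :=
  {y | ∀ n : ℕ, dist ((f ^ n) x) ((f ^ n) y) ≤ ε}

/-- The local unstable set `W^u_ε(x)`. -/
def localUnstable {M : Type*} [MetricSpace M] (f : Equiv.Perm M) (ε : ℝ) (x : M) :
    Set M :=
  {y | ∀ n : ℕ, dist ((f⁻¹ ^ n) x) ((f⁻¹ ^ n) y) ≤ ε}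

/-- The global stable set `W^s(x) = ⋃_{n ≥ 0} f^{-n}(W^s_ε(f^n(x)))`. -/
def globalStable {M : Type*} [MetricSpace M] (f : Equiv.Perm M) (ε : ℝ) (x : M) :
    Set M :=
  {y | ∃ n : ℕ, (f ^ n) y ∈ localStable f ε ((f ^ n) x)}

/-- The global unstable set `W^u(x) = ⋃_{n ≥ 0} f^{n}(W^u_ε(f^{-n}(x)))`. -/
def globalUnstable {M : Type*} [MetricSpace M] (f : Equiv.Perm M) (ε : ℝ) (x : M) :
    Set M :=
  {y | ∃ n : ℕ, (f⁻¹ ^ n) y ∈ localUnstable f ε ((f⁻¹ ^ n) x)}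

/-- `f` is a hyperbolic homeomorphism with local product structure, with constants
`C, ε, λ, τ`. -/
structure IsHyperbolicLPS {M : Type*} [MetricSpace M] (f : M ≃ₜ M)
    (C ε lam τ : ℝ) : Prop where
  C_pos : 0 < C
  eps_pos : 0 < ε
  lam_pos : 0 < lam
  tau_pos : 0 < τ
  stable_contr : ∀ x y₁ y₂ : M, y₁ ∈ localStable f.toEquiv ε x →
    y₂ ∈ localStable f.toEquiv ε x → ∀ n : ℕ,
      dist ((f.toEquiv ^ n) y₁) ((f.toEquiv ^ n) y₂) ≤
        C * Real.exp (-lam * n) * dist y₁ y₂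
  unstable_contr : ∀ x y₁ y₂ : M, y₁ ∈ localUnstable f.toEquiv ε x →
    y₂ ∈ localUnstable f.toEquiv ε x → ∀ n : ℕ,
      dist ((f.toEquiv⁻¹ ^ n) y₁) ((f.toEquiv⁻¹ ^ n) y₂) ≤
        C * Real.exp (-lam * n) * dist y₁ y₂
  bracket : ∃ br : {p : M × M // dist p.1 p.2 ≤ τ} → M, Continuous br ∧
    ∀ p : {p : M × M // dist p.1 p.2 ≤ τ},
      localStable f.toEquiv ε p.1.1 ∩ localUnstable f.toEquiv ε p.1.2 = {br p}

/-- `A` is `ν`-Hölder continuous (w.r.t. the operator norm on matrices). -/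
def IsHolder {M : Type*} [MetricSpace M] {d : ℕ} (ν : ℝ)
    (A : M → GL (Fin d) ℝ) : Prop :=
  ∃ C > 0, ∀ x y : M,
    ‖(A x : Matrix (Fin d) (Fin d) ℝ) - (A y : Matrix (Fin d) (Fin d) ℝ)‖ ≤
      C * dist x y ^ ν

/-- The fiber-bunching inequalities (i), (ii), (iii) with constants `ρ, θ`. -/
def FiberBunchedWith {M : Type*} [MetricSpace M] {d : ℕ} (f : Equiv.Perm M)
    (α : MulAut (GL (Fin d) ℝ)) (A : M → GL (Fin d) ℝ) (ρ θ : ℝ) : Prop :=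
  ∃ C > 0,
    (∀ (n : ℤ) (x : M),
      ‖(((α ^ (-n)) (twc f α A n x) : GL (Fin d) ℝ) : Matrix (Fin d) (Fin d) ℝ)‖ *
        ‖(((α ^ (-n)) ((twc f α A n x)⁻¹) : GL (Fin d) ℝ) : Matrix (Fin d) (Fin d) ℝ)‖ <
        C * Real.exp (θ * |(n : ℝ)|)) ∧
    (∀ (n : ℤ) (T₁ T₂ : GL (Fin d) ℝ),
      ‖(((α ^ n) T₁ : GL (Fin d) ℝ) : Matrix (Fin d) (Fin d) ℝ) -
          (((α ^ n) T₂ : GL (Fin d) ℝ) : Matrix (Fin d) (Fin d) ℝ)‖ ≤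
        C * Real.exp (ρ * |(n : ℝ)|) *
          ‖(T₁ : Matrix (Fin d) (Fin d) ℝ) - (T₂ : Matrix (Fin d) (Fin d) ℝ)‖) ∧
    (∀ (n : ℤ) (T : GL (Fin d) ℝ),
      ‖(((α ^ n) T : GL (Fin d) ℝ) : Matrix (Fin d) (Fin d) ℝ)‖ ≤
        C * Real.exp (ρ * |(n : ℝ)|) * ‖(T : Matrix (Fin d) (Fin d) ℝ)‖)

/-- The twisted cocycle generated by `A` is fiber-bunched. -/
def FiberBunched {M : Type*} [MetricSpace M] {d : ℕ} (f : Equiv.Perm M)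
    (α : MulAut (GL (Fin d) ℝ)) (A : M → GL (Fin d) ℝ) (ν lam : ℝ) : Prop :=
  ∃ ρ θ : ℝ, 0 < ρ ∧ 0 < θ ∧ 5 * ρ + 2 * θ < ν * lam ∧ FiberBunchedWith f α A ρ θ

/-- `H` is the stable holonomy `H^{s,A,α}_{a b}`. -/
def IsStableHol {M : Type*} [MetricSpace M] {d : ℕ} (f : Equiv.Perm M)
    (α : MulAut (GL (Fin d) ℝ)) (A : M → GL (Fin d) ℝ) (a b : M)
    (H : GL (Fin d) ℝ) : Prop :=
  Filter.Tendsto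
    (fun n : ℕ =>
      (((α ^ (-(n : ℤ))) ((twc f α A n b)⁻¹ * twc f α A n a) : GL (Fin d) ℝ) :
        Matrix (Fin d) (Fin d) ℝ))
    Filter.atTop (nhds (H : Matrix (Fin d) (Fin d) ℝ))

/-- `H` is the unstable holonomy `H^{u,A,α}_{a b}`. -/
def IsUnstableHol {M : Type*} [MetricSpace M] {d : ℕ} (f : Equiv.Perm M)
    (α : MulAut (GL (Fin d) ℝ)) (A : M → GL (Fin d) ℝ) (a b : M)
    (H : GL (Fin d) ℝ) : Prop :=
  Filter.Tendsto
    (fun n : ℕ =>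
      (((α ^ (n : ℤ)) ((twc f α A (-(n : ℤ)) b)⁻¹ * twc f α A (-(n : ℤ)) a) :
          GL (Fin d) ℝ) : Matrix (Fin d) (Fin d) ℝ))
    Filter.atTop (nhds (H : Matrix (Fin d) (Fin d) ℝ))

end

/-!
The approximants `Dₙ` of a holonomy satisfy `Dₙ₊₁ = Pₙ⁻¹ Qₙ Pₙ Dₙ`, where `Pₙ` is a twisted
cocycle product and `Qₙ` a twisted image of `A(a)⁻¹ A(b)` (or `A(a) A(b)⁻¹`) for points `a, b`
of the orbits of `z` and `y`. Fiber bunching (i) bounds `‖Pₙ‖ ‖Pₙ⁻¹‖` by a multiple of `e^{θn}`;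
fiber bunching (ii), Hölder continuity of `A` and the exponential contraction of the orbits bound
`‖Qₙ - 1‖` by a multiple of `e^{(ρ - νλ)n} d(y,z)^ν`. Since `θ + ρ < νλ`, this gives
`‖Dₙ₊₁ - Dₙ‖ ≤ K rⁿ d(y,z)^ν ‖Dₙ‖` with `r < 1`, and a discrete Grönwall argument bounds
`‖Dₙ - 1‖`, hence `‖H - 1‖`, by a multiple of `d(y,z)^ν`, uniformly because `d(y,z) ≤ 2ε`.
-/

open Filter Topology Finset

theorem norm_le_exp_sum_mul_of_norm_sub_succ_le {E : Type*} [SeminormedAddCommGroup E]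
    {u : ℕ → E} {a : ℕ → ℝ} (hu : ∀ n, ‖u (n + 1) - u n‖ ≤ a n * ‖u n‖) (n : ℕ) :
    ‖u n‖ ≤ Real.exp (∑ k ∈ range n, a k) * ‖u 0‖ := by
  induction n with
  | zero => simp
  | succ n ih =>
    calc ‖u (n + 1)‖ ≤ ‖u n‖ + ‖u (n + 1) - u n‖ := norm_le_norm_add_norm_sub' _ _
      _ ≤ (a n + 1) * ‖u n‖ := by linarith [hu n]
      _ ≤ Real.exp (a n) * (Real.exp (∑ k ∈ range n, a k) * ‖u 0‖) :=
        mul_le_mul (Real.add_one_le_exp _) ih (norm_nonneg _) (Real.exp_nonneg _)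
      _ = Real.exp (∑ k ∈ range (n + 1), a k) * ‖u 0‖ := by
        rw [sum_range_succ, Real.exp_add]; ring

theorem norm_sub_le_mul_exp_of_norm_sub_succ_le {E : Type*} [SeminormedAddCommGroup E]
    {u : ℕ → E} {a : ℕ → ℝ} {S : ℝ} {L : E} (ha : ∀ n, 0 ≤ a n) (hS : HasSum a S)
    (hu : ∀ n, ‖u (n + 1) - u n‖ ≤ a n * ‖u n‖) (hL : Tendsto u atTop (𝓝 L)) :
    ‖L - u 0‖ ≤ S * Real.exp S * ‖u 0‖ := by
  have hpartial : ∀ n, ∑ k ∈ range n, a k ≤ S := fun n => sum_le_hasSum _ (fun k _ => ha k) hS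
  have hbound (n : ℕ) : ‖u n‖ ≤ Real.exp S * ‖u 0‖ :=
    (norm_le_exp_sum_mul_of_norm_sub_succ_le hu n).trans (by gcongr; exact hpartial n)
  refine le_of_tendsto (hL.sub_const (u 0)).norm (Eventually.of_forall fun n => ?_)
  calc ‖u n - u 0‖ = dist (u 0) (u n) := by rw [dist_comm, dist_eq_norm]
    _ ≤ ∑ k ∈ range n, dist (u k) (u (k + 1)) := dist_le_range_sum_dist u n
    _ ≤ ∑ k ∈ range n, a k * (Real.exp S * ‖u 0‖) := by
      gcongr with k
      rw [dist_comm, dist_eq_norm]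
      exact (hu k).trans (by gcongr; exacts [ha k, hbound k])
    _ = (∑ k ∈ range n, a k) * (Real.exp S * ‖u 0‖) := by rw [sum_mul]
    _ ≤ S * Real.exp S * ‖u 0‖ := by
      rw [mul_assoc]; gcongr; exact hpartial n

theorem continuous_of_norm_sub_le_rpow {X E : Type*} [PseudoMetricSpace X]
    [SeminormedAddCommGroup E] {g : X → E} {K ν : ℝ} (hν : 0 < ν)
    (hg : ∀ x y, ‖g x - g y‖ ≤ K * dist x y ^ ν) : Continuous g := by
  refine continuous_iff_continuousAt.2 fun x => ?_
  rw [ContinuousAt, tendsto_iff_norm_sub_tendsto_zero]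
  refine squeeze_zero (fun _ => norm_nonneg _) (fun y => hg y x) ?_
  have : Continuous fun y => K * dist y x ^ ν :=
    continuous_const.mul ((continuous_id.dist continuous_const).rpow_const fun _ => Or.inr hν.le)
  simpa [Real.zero_rpow hν.ne'] using this.tendsto x

theorem Matrix.l2_opNorm_one_le {n : Type*} [Fintype n] [DecidableEq n] :
    ‖(1 : Matrix n n ℝ)‖ ≤ 1 := by
  rw [Matrix.cstar_norm_def, map_one]
  exact ContinuousLinearMap.norm_id_le

theorem exists_norm_units_inv_le {X R : Type*} [TopologicalSpace X] [CompactSpace X]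
    [NormedRing R] [HasSummableGeomSeries R] {u : X → Rˣ} (hu : Continuous fun x => (u x : R)) :
    ∃ K > 0, ∀ x, ‖(((u x)⁻¹ : Rˣ) : R)‖ ≤ K := by
  have hinv : Continuous fun x => (((u x)⁻¹ : Rˣ) : R) :=
    Units.continuous_coe_inv.comp (Units.isOpenEmbedding_val.isEmbedding.continuous_iff.2 hu)
  obtain ⟨K, hK⟩ := isCompact_univ.exists_bound_of_continuousOn hinv.continuousOn
  exact ⟨max K 1, by positivity, fun x => (hK x trivial).trans (le_max_left _ _)⟩

namespace Units

variable {R : Type*} [NormedRing R]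

theorem norm_inv_mul_sub_one_le (u v : Rˣ) :
    ‖((u⁻¹ * v : Rˣ) : R) - 1‖ ≤ ‖((u⁻¹ : Rˣ) : R)‖ * ‖(v : R) - u‖ := by
  rw [Units.val_mul, ← Units.inv_mul u, ← mul_sub]
  exact norm_mul_le _ _

theorem norm_mul_inv_sub_one_le (u v : Rˣ) :
    ‖((u * v⁻¹ : Rˣ) : R) - 1‖ ≤ ‖(u : R) - v‖ * ‖((v⁻¹ : Rˣ) : R)‖ := by
  rw [Units.val_mul, ← Units.mul_inv v, ← sub_mul]
  exact norm_mul_le _ _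

theorem norm_conj_mul_sub_le (p q x : Rˣ) :
    ‖((p⁻¹ * q * p * x : Rˣ) : R) - x‖ ≤
      ‖(p : R)‖ * ‖((p⁻¹ : Rˣ) : R)‖ * ‖(q : R) - 1‖ * ‖(x : R)‖ := by
  have h : ((p⁻¹ * q * p * x : Rˣ) : R) - x = ((p⁻¹ : Rˣ) : R) * ((q : R) - 1) * p * x := by
    simp only [Units.val_mul, mul_sub, sub_mul, mul_one, Units.inv_mul, one_mul]
  rw [h]
  calc _ ≤ ‖((p⁻¹ : Rˣ) : R)‖ * ‖(q : R) - 1‖ * ‖(p : R)‖ * ‖(x : R)‖ := by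
        refine (norm_mul_le _ _).trans ?_
        gcongr
        exact norm_mul₃_le
    _ = _ := by ring

theorem norm_sub_one_le_of_conj_recursion (h1 : ‖(1 : R)‖ ≤ 1) {D P Q : ℕ → Rˣ} {H : R}
    {K r c c₀ : ℝ} (hK : 0 ≤ K) (hr0 : 0 ≤ r) (hr1 : r < 1) (hc : 0 ≤ c) (hcc₀ : c ≤ c₀)
    (hD0 : D 0 = 1) (hD : ∀ n, D (n + 1) = (P n)⁻¹ * Q n * P n * D n)
    (hPQ : ∀ n, ‖(P n : R)‖ * ‖(((P n)⁻¹ : Rˣ) : R)‖ * ‖(Q n : R) - 1‖ ≤ K * r ^ n * c)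
    (hH : Tendsto (fun n => (D n : R)) atTop (𝓝 H)) :
    ‖H - 1‖ ≤ K / (1 - r) * Real.exp (K * c₀ / (1 - r)) * c := by
  have h1r : 0 < 1 - r := by linarith
  have hS : HasSum (fun n => K * r ^ n * c) (K * c / (1 - r)) := by
    simpa [div_eq_mul_inv, mul_right_comm] using
      ((hasSum_geometric_of_lt_one hr0 hr1).mul_left K).mul_right c
  have hstep (n : ℕ) : ‖(D (n + 1) : R) - D n‖ ≤ K * r ^ n * c * ‖(D n : R)‖ := by
    rw [hD]
    exact (norm_conj_mul_sub_le _ _ _).trans (mul_le_mul_of_nonneg_right (hPQ n) (norm_nonneg _))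
  have := norm_sub_le_mul_exp_of_norm_sub_succ_le (fun n => by positivity) hS hstep hH
  rw [hD0, Units.val_one] at this
  calc ‖H - 1‖ ≤ K * c / (1 - r) * Real.exp (K * c / (1 - r)) * 1 := this.trans (by gcongr)
    _ ≤ K * c / (1 - r) * Real.exp (K * c₀ / (1 - r)) := by rw [mul_one]; gcongr
    _ = K / (1 - r) * Real.exp (K * c₀ / (1 - r)) * c := by ring

end Units

theorem dist_le_two_mul_of_mem_localStable {M : Type*} [MetricSpace M] {f : Equiv.Perm M}
    {ε : ℝ} {x y z : M} (hy : y ∈ localStable f ε x) (hz : z ∈ localStable f ε x) :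
    dist y z ≤ 2 * ε := by
  have := (dist_triangle_left y z x).trans (add_le_add (hy 0) (hz 0))
  simpa [two_mul] using this

theorem dist_le_two_mul_of_mem_localUnstable {M : Type*} [MetricSpace M] {f : Equiv.Perm M}
    {ε : ℝ} {x y z : M} (hy : y ∈ localUnstable f ε x) (hz : z ∈ localUnstable f ε x) :
    dist y z ≤ 2 * ε := by
  have := (dist_triangle_left y z x).trans (add_le_add (hy 0) (hz 0))
  simpa [two_mul] using this

section TwistedCocycle

variable {M G : Type*} [Group G] (f : Equiv.Perm M) (α : MulAut G) (A : M → G)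

def stableHolApprox (y z : M) (n : ℕ) : G :=
  (α ^ (-(n : ℤ))) ((twc f α A n z)⁻¹ * twc f α A n y)

def unstableHolApprox (y z : M) (n : ℕ) : G :=
  (α ^ (n : ℤ)) ((twc f α A (-(n : ℤ)) z)⁻¹ * twc f α A (-(n : ℤ)) y)

theorem MulAut.zpow_apply_zpow_apply (a b : ℤ) (g : G) :
    (α ^ a) ((α ^ b) g) = (α ^ (a + b)) g := by
  rw [zpow_add, MulAut.mul_apply]

theorem twcN_succ' (n : ℕ) (x : M) :
    twcN f α A (n + 1) x = twcN f α A n (f x) * (α ^ n) (A x) := by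
  induction n with
  | zero => simp [twcN]
  | succ n ih =>
    rw [twcN, ih, map_mul, twcN, ← Equiv.Perm.mul_apply, ← pow_succ, ← MulAut.mul_apply,
      ← pow_succ', mul_assoc]

theorem twc_natCast (n : ℕ) (x : M) : twc f α A n x = twcN f α A n x := rfl

theorem zpow_apply_twc_neg (n : ℕ) (x : M) :
    (α ^ (n : ℤ)) (twc f α A (-(n : ℤ)) x) = (twcN f α A n ((f⁻¹ ^ n) x))⁻¹ := by
  cases n with
  | zero => simp [twc, twcN]
  | succ n =>
    show (α ^ ((n + 1 : ℕ) : ℤ)) ((α ^ (-((n + 1 : ℕ) : ℤ)))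
      ((twcN f α A (n + 1) ((f ^ (-((n + 1 : ℕ) : ℤ))) x))⁻¹)) = _
    rw [MulAut.zpow_apply_zpow_apply, add_neg_cancel, zpow_zero, zpow_neg, zpow_natCast, inv_pow]
    rfl

theorem stableHolApprox_zero (y z : M) : stableHolApprox f α A y z 0 = 1 := by
  simp [stableHolApprox, twc, twcN]

theorem unstableHolApprox_zero (y z : M) : unstableHolApprox f α A y z 0 = 1 := by
  simp [unstableHolApprox, twc, twcN]

theorem stableHolApprox_succ (y z : M) (n : ℕ) :
    stableHolApprox f α A y z (n + 1) =
      ((α ^ (-(n : ℤ))) (twc f α A n z))⁻¹ *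
        (α ^ (-((n : ℤ) + 1))) ((A ((f ^ n) z))⁻¹ * A ((f ^ n) y)) *
        (α ^ (-(n : ℤ))) (twc f α A n z) * stableHolApprox f α A y z n := by
  have h (g : G) : (α ^ (-((n : ℤ) + 1))) (α g) = (α ^ (-(n : ℤ))) g := by
    have := MulAut.zpow_apply_zpow_apply α (-((n : ℤ) + 1)) 1 g
    rwa [zpow_one, show -((n : ℤ) + 1) + 1 = -n by ring] at this
  simp only [stableHolApprox, twc_natCast]
  rw [twcN, twcN, Nat.cast_succ]
  simp only [mul_inv_rev, map_mul, map_inv, h]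
  group

theorem unstableHolApprox_succ (y z : M) (n : ℕ) :
    unstableHolApprox f α A y z (n + 1) =
      ((α ^ (n : ℤ)) (twc f α A (-(n : ℤ)) z))⁻¹ *
        (α ^ (n : ℤ)) (A ((f⁻¹ ^ (n + 1)) z) * (A ((f⁻¹ ^ (n + 1)) y))⁻¹) *
        (α ^ (n : ℤ)) (twc f α A (-(n : ℤ)) z) * unstableHolApprox f α A y z n := by
  have h (w : M) : twcN f α A (n + 1) ((f⁻¹ ^ (n + 1)) w) =
      twcN f α A n ((f⁻¹ ^ n) w) * (α ^ n) (A ((f⁻¹ ^ (n + 1)) w)) := by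
    rw [twcN_succ', pow_succ', Equiv.Perm.mul_apply, ← Equiv.Perm.mul_apply f, mul_inv_cancel,
      Equiv.Perm.one_apply]
  simp only [unstableHolApprox, map_mul, map_inv, zpow_apply_twc_neg]
  rw [h, h]
  simp only [zpow_natCast]
  group

end TwistedCocycle

theorem mul_le_geometric_of_exp_bounds {C₁ θ ρ L C lam ν δ p q t : ℝ} (n : ℕ) (hC₁ : 0 ≤ C₁)
    (hL : 0 ≤ L) (hC : 0 ≤ C) (hν : 0 ≤ ν) (hδ : 0 ≤ δ) (hq0 : 0 ≤ q) (ht0 : 0 ≤ t)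
    (hp : p ≤ C₁ * Real.exp (θ * n)) (hq : q ≤ C₁ * Real.exp (ρ * (n + 1)) * (L * t ^ ν))
    (ht : t ≤ C * Real.exp (-lam * n) * δ) :
    p * q ≤ C₁ ^ 2 * Real.exp ρ * L * C ^ ν * Real.exp (θ + ρ - ν * lam) ^ n * δ ^ ν := by
  have htν : t ^ ν ≤ C ^ ν * Real.exp (-lam * n * ν) * δ ^ ν := by
    calc t ^ ν ≤ (C * Real.exp (-lam * n) * δ) ^ ν := Real.rpow_le_rpow ht0 ht hν
      _ = C ^ ν * Real.exp (-lam * n * ν) * δ ^ ν := by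
        rw [Real.mul_rpow (by positivity) hδ, Real.mul_rpow hC (Real.exp_nonneg _), ← Real.exp_mul]
  have hexp : Real.exp (θ * n) * (Real.exp (ρ * (n + 1)) * Real.exp (-lam * n * ν)) =
      Real.exp ρ * Real.exp (θ + ρ - ν * lam) ^ n := by
    rw [← Real.exp_nat_mul, ← Real.exp_add, ← Real.exp_add, ← Real.exp_add]
    ring_nf
  calc p * q ≤ (C₁ * Real.exp (θ * n)) *
        (C₁ * Real.exp (ρ * (n + 1)) * (L * (C ^ ν * Real.exp (-lam * n * ν) * δ ^ ν))) :=
      mul_le_mul hp (hq.trans (by gcongr)) hq0 (by positivity)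
    _ = C₁ ^ 2 * Real.exp ρ * L * C ^ ν * Real.exp (θ + ρ - ν * lam) ^ n * δ ^ ν := by
      linear_combination C₁ ^ 2 * L * C ^ ν * δ ^ ν * hexp

section HolonomySteps

variable {M R : Type*} [MetricSpace M] [NormedRing R] {f : Equiv.Perm M} {α : MulAut Rˣ}
  {A : M → Rˣ} {C₁ θ ρ CA Kinv C lam ν : ℝ}

theorem norm_stable_conj_step_le (hC₁ : 0 ≤ C₁) (hCA : 0 ≤ CA) (hKinv : 0 ≤ Kinv) (hC : 0 ≤ C)
    (hν : 0 ≤ ν)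
    (hi : ∀ (m : ℤ) (x : M), ‖(((α ^ (-m)) (twc f α A m x) : Rˣ) : R)‖ *
      ‖(((α ^ (-m)) ((twc f α A m x)⁻¹) : Rˣ) : R)‖ ≤ C₁ * Real.exp (θ * |(m : ℝ)|))
    (hii : ∀ (m : ℤ) (T₁ T₂ : Rˣ), ‖(((α ^ m) T₁ : Rˣ) : R) - (((α ^ m) T₂ : Rˣ) : R)‖ ≤
      C₁ * Real.exp (ρ * |(m : ℝ)|) * ‖(T₁ : R) - (T₂ : R)‖)
    (hA : ∀ x y, ‖(A x : R) - (A y : R)‖ ≤ CA * dist x y ^ ν)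
    (hinv : ∀ x, ‖(((A x)⁻¹ : Rˣ) : R)‖ ≤ Kinv) {y z : M}
    (hyz : ∀ n : ℕ, dist ((f ^ n) y) ((f ^ n) z) ≤ C * Real.exp (-lam * n) * dist y z) (n : ℕ) :
    ‖(((α ^ (-(n : ℤ))) (twc f α A n z) : Rˣ) : R)‖ *
        ‖((((α ^ (-(n : ℤ))) (twc f α A n z))⁻¹ : Rˣ) : R)‖ *
        ‖(((α ^ (-((n : ℤ) + 1))) ((A ((f ^ n) z))⁻¹ * A ((f ^ n) y)) : Rˣ) : R) - 1‖ ≤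
      C₁ ^ 2 * Real.exp ρ * (Kinv * CA) * C ^ ν * Real.exp (θ + ρ - ν * lam) ^ n *
        dist y z ^ ν := by
  refine mul_le_geometric_of_exp_bounds (t := dist ((f ^ n) y) ((f ^ n) z)) n hC₁ (by positivity)
    hC hν dist_nonneg (norm_nonneg _) dist_nonneg ?_ ?_ (hyz n)
  · simpa [map_inv] using hi n z
  · have hT := hii (-((n : ℤ) + 1)) ((A ((f ^ n) z))⁻¹ * A ((f ^ n) y)) 1
    have habs : |((-((n : ℤ) + 1) : ℤ) : ℝ)| = n + 1 := by
      push_cast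
      rw [abs_neg, abs_of_nonneg (by positivity)]
    rw [map_one, Units.val_one, habs] at hT
    refine hT.trans ?_
    rw [mul_assoc Kinv]
    gcongr
    exact (Units.norm_inv_mul_sub_one_le _ _).trans
      (mul_le_mul (hinv _) (hA _ _) (norm_nonneg _) hKinv)

theorem norm_unstable_conj_step_le (hC₁ : 0 ≤ C₁) (hCA : 0 ≤ CA) (hKinv : 0 ≤ Kinv) (hC : 0 ≤ C)
    (hρ : 0 ≤ ρ) (hlam : 0 ≤ lam) (hν : 0 ≤ ν)
    (hi : ∀ (m : ℤ) (x : M), ‖(((α ^ (-m)) (twc f α A m x) : Rˣ) : R)‖ *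
      ‖(((α ^ (-m)) ((twc f α A m x)⁻¹) : Rˣ) : R)‖ ≤ C₁ * Real.exp (θ * |(m : ℝ)|))
    (hii : ∀ (m : ℤ) (T₁ T₂ : Rˣ), ‖(((α ^ m) T₁ : Rˣ) : R) - (((α ^ m) T₂ : Rˣ) : R)‖ ≤
      C₁ * Real.exp (ρ * |(m : ℝ)|) * ‖(T₁ : R) - (T₂ : R)‖)
    (hA : ∀ x y, ‖(A x : R) - (A y : R)‖ ≤ CA * dist x y ^ ν)
    (hinv : ∀ x, ‖(((A x)⁻¹ : Rˣ) : R)‖ ≤ Kinv) {y z : M}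
    (hyz : ∀ n : ℕ, dist ((f⁻¹ ^ n) y) ((f⁻¹ ^ n) z) ≤ C * Real.exp (-lam * n) * dist y z)
    (n : ℕ) :
    ‖(((α ^ (n : ℤ)) (twc f α A (-(n : ℤ)) z) : Rˣ) : R)‖ *
        ‖((((α ^ (n : ℤ)) (twc f α A (-(n : ℤ)) z))⁻¹ : Rˣ) : R)‖ *
        ‖(((α ^ (n : ℤ)) (A ((f⁻¹ ^ (n + 1)) z) * (A ((f⁻¹ ^ (n + 1)) y))⁻¹) : Rˣ) : R) - 1‖ ≤
      C₁ ^ 2 * Real.exp ρ * (Kinv * CA) * C ^ ν * Real.exp (θ + ρ - ν * lam) ^ n *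
        dist y z ^ ν := by
  refine mul_le_geometric_of_exp_bounds (t := dist ((f⁻¹ ^ (n + 1)) z) ((f⁻¹ ^ (n + 1)) y)) n hC₁
    (by positivity) hC hν dist_nonneg (norm_nonneg _) dist_nonneg ?_ ?_ ?_
  · simpa [map_inv] using hi (-(n : ℤ)) z
  · have hT := hii n (A ((f⁻¹ ^ (n + 1)) z) * (A ((f⁻¹ ^ (n + 1)) y))⁻¹) 1
    rw [map_one, Units.val_one, Int.cast_natCast, Nat.abs_cast] at hT
    refine hT.trans (mul_le_mul (by gcongr; linarith) ?_ (norm_nonneg _) (by positivity))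
    calc _ ≤ CA * dist ((f⁻¹ ^ (n + 1)) z) ((f⁻¹ ^ (n + 1)) y) ^ ν * Kinv :=
          (Units.norm_mul_inv_sub_one_le _ _).trans
            (mul_le_mul (hA _ _) (hinv _) (norm_nonneg _) (by positivity))
      _ = Kinv * CA * dist ((f⁻¹ ^ (n + 1)) z) ((f⁻¹ ^ (n + 1)) y) ^ ν := by ring
  · rw [dist_comm]
    refine (hyz (n + 1)).trans ?_
    exact mul_le_mul_of_nonneg_right
      (mul_le_mul_of_nonneg_left (Real.exp_le_exp.2 (by push_cast; nlinarith)) hC) dist_nonneg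

end HolonomySteps

/-- **Hölder estimate for holonomies.** There is a constant `C' > 0` such that for all
`y, z` in a common local stable set, `‖H^{s,A,α}_{yz} − Id‖ ≤ C' d(y,z)^ν`; the analogous
estimate holds for the unstable holonomies on local unstable sets. -/
theorem holonomies_holder_estimate {M : Type*} [MetricSpace M] [CompactSpace M] {d : ℕ}
    (f : M ≃ₜ M) (C ε lam τ ν : ℝ) (hν : 0 < ν)
    (hf : IsHyperbolicLPS f C ε lam τ)
    (A : M → GL (Fin d) ℝ) (α : MulAut (GL (Fin d) ℝ))
    (hA : IsHolder ν A) (hFA : FiberBunched f.toEquiv α A ν lam) :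
    ∃ C' > 0,
      (∀ x : M, ∀ y ∈ localStable f.toEquiv ε x, ∀ z ∈ localStable f.toEquiv ε x,
        ∀ H : GL (Fin d) ℝ, IsStableHol f.toEquiv α A y z H →
          ‖(H : Matrix (Fin d) (Fin d) ℝ) - 1‖ ≤ C' * dist y z ^ ν) ∧
      (∀ x : M, ∀ y ∈ localUnstable f.toEquiv ε x, ∀ z ∈ localUnstable f.toEquiv ε x,
        ∀ H : GL (Fin d) ℝ, IsUnstableHol f.toEquiv α A y z H →
          ‖(H : Matrix (Fin d) (Fin d) ℝ) - 1‖ ≤ C' * dist y z ^ ν) := by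
  obtain ⟨ρ, θ, hρ, hθ, hbunch, C₁, hC₁, hi, hii, -⟩ := hFA
  replace hi := fun m x => (hi m x).le
  obtain ⟨CA, hCA, hAH⟩ := hA
  obtain ⟨Kinv, hKinv, hinv⟩ := exists_norm_units_inv_le (continuous_of_norm_sub_le_rpow hν hAH)
  set r := Real.exp (θ + ρ - ν * lam)
  have hr : r < 1 := Real.exp_lt_one_iff.2 (by linarith)
  set K := C₁ ^ 2 * Real.exp ρ * (Kinv * CA) * C ^ ν
  have hK : 0 < K := by have := hf.C_pos; positivity
  have hc (y z : M) (h : dist y z ≤ 2 * ε) : dist y z ^ ν ≤ (2 * ε) ^ ν :=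
    Real.rpow_le_rpow dist_nonneg h hν.le
  have h1r : 0 < 1 - r := sub_pos.2 hr
  refine ⟨K / (1 - r) * Real.exp (K * (2 * ε) ^ ν / (1 - r)), by positivity,
    fun x y hy z hz H hH => ?_, fun x y hy z hz H hH => ?_⟩
  · exact Units.norm_sub_one_le_of_conj_recursion Matrix.l2_opNorm_one_le hK.le
      (Real.exp_nonneg _) hr (by positivity) (hc y z (dist_le_two_mul_of_mem_localStable hy hz))
      (stableHolApprox_zero _ _ _ y z) (stableHolApprox_succ _ _ _ y z)
      (norm_stable_conj_step_le hC₁.le hCA.le hKinv.le hf.C_pos.le hν.le hi hii hAH hinv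
        (hf.stable_contr x y z hy hz)) hH
  · exact Units.norm_sub_one_le_of_conj_recursion Matrix.l2_opNorm_one_le hK.le
      (Real.exp_nonneg _) hr (by positivity) (hc y z (dist_le_two_mul_of_mem_localUnstable hy hz))
      (unstableHolApprox_zero _ _ _ y z) (unstableHolApprox_succ _ _ _ y z)
      (norm_unstable_conj_step_le hC₁.le hCA.le hKinv.le hf.C_pos.le hρ.le hf.lam_pos.le hν.le hi
        hii hAH hinv (hf.unstable_contr x y z hy hz)) hH
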